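/- arXiv:1210.7961 — 2 statements merged into one kernel-verified Lean document; each statement's English description precedes it below -/
import Mathlib

section
/- If L_1 and L_2 are non-proportional nonzero linear forms and 2k < d, then the subspaces V_1 = { L_1^{d-k} F : F ∈ R_k } and V_2 = { L_2^{d-k} F : F ∈ R_k } of R_d intersect trivially: V_1 ∩ V_2 = {0}. -/
/-!
A nonzero linear form is irreducible, hence prime in the factorial ring `F[X₀, …, Xₙ]`, and
`L₂` does not divide `L₁` because the two forms are not proportional. So if
`L₁ ^ e * F₁ = L₂ ^ e * F₂` with `e = d - k`, primality forces `L₂ ^ e ∣ F₁`; but `F₁` is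
homogeneous of degree `k < e`, so `F₁ = 0`.
-/

open MvPolynomial

namespace MvPolynomial

variable {σ K : Type*} [Field K]

theorem irreducible_of_isHomogeneous_one {L : MvPolynomial σ K} (hL : L.IsHomogeneous 1)
    (hL0 : L ≠ 0) : Irreducible L := by
  refine irreducible_of_totalDegree_eq_one (hL.totalDegree hL0) fun x hx => ?_
  rcases eq_or_ne x 0 with rfl | hx0
  · exact absurd (MvPolynomial.ext _ _ fun m => by simpa using hx m) hL0
  · exact hx0.isUnit

theorem exists_smul_eq_of_dvd_of_isHomogeneous_one {L M : MvPolynomial σ K}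
    (hL : L.IsHomogeneous 1) (hM : M.IsHomogeneous 1) (hL0 : L ≠ 0) (hLM : L ∣ M) :
    ∃ c : K, M = c • L := by
  obtain ⟨u, rfl⟩ := hLM
  rcases eq_or_ne u 0 with rfl | hu0
  · exact ⟨0, by simp⟩
  have hdeg := hM.totalDegree (mul_ne_zero hL0 hu0)
  rw [totalDegree_mul_of_isDomain hL0 hu0, hL.totalDegree hL0] at hdeg
  have hu : u = C (u.coeff 0) := totalDegree_eq_zero_iff_eq_C.mp (by omega)
  exact ⟨u.coeff 0, by rw [smul_eq_C_mul, mul_comm, ← hu]⟩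

theorem IsHomogeneous.eq_zero_of_dvd {R : Type*} [CommRing R] [IsDomain R]
    {f q : MvPolynomial σ R} {k : ℕ} (hq : q.IsHomogeneous k) (hfq : f ∣ q)
    (hk : k < f.totalDegree) : q = 0 := by
  by_contra hq0
  have := totalDegree_le_of_dvd_of_isDomain hfq hq0
  rw [hq.totalDegree hq0] at this
  omega

end MvPolynomial

theorem osculating_intersection_trivial_general (F : Type*) [Field F] (n d k : ℕ)
    (h2k : 2 * k < d)
    (L₁ L₂ : MvPolynomial (Fin (n+1)) F)
    (hL₁ : L₁ ∈ MvPolynomial.homogeneousSubmodule (Fin (n+1)) F 1)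
    (hL₂ : L₂ ∈ MvPolynomial.homogeneousSubmodule (Fin (n+1)) F 1)
    (hL₂0 : L₂ ≠ 0)
    (hprop : ¬ ∃ c : F, L₁ = c • L₂) :
    ((MvPolynomial.homogeneousSubmodule (Fin (n+1)) F k).map
        (LinearMap.mulLeft F (L₁ ^ (d - k)))) ⊓
      ((MvPolynomial.homogeneousSubmodule (Fin (n+1)) F k).map
        (LinearMap.mulLeft F (L₂ ^ (d - k)))) = ⊥ := by
  rw [mem_homogeneousSubmodule] at hL₁ hL₂
  rw [eq_bot_iff]
  rintro x ⟨⟨F₁, hF₁, rfl⟩, ⟨F₂, -, hx⟩⟩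
  simp only [LinearMap.mulLeft_apply] at hx ⊢
  have hprime : Prime L₂ := (irreducible_of_isHomogeneous_one hL₂ hL₂0).prime
  have hndvd : ¬ L₂ ∣ L₁ ^ (d - k) := fun h =>
    hprop (exists_smul_eq_of_dvd_of_isHomogeneous_one hL₂ hL₁ hL₂0 (hprime.dvd_of_dvd_pow h))
  have hdvd : L₂ ^ (d - k) ∣ F₁ := hprime.pow_dvd_of_dvd_mul_left _ hndvd ⟨F₂, hx.symm⟩
  have hdeg : (L₂ ^ (d - k)).totalDegree = d - k := by
    simpa using (hL₂.pow (d - k)).totalDegree (pow_ne_zero _ hL₂0)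
  rw [(mem_homogeneousSubmodule _ _).mp hF₁ |>.eq_zero_of_dvd hdvd (by omega), mul_zero]
  exact Submodule.zero_mem _

theorem osculating_intersection_trivial (F : Type*) [Field F] (n d k : ℕ) (hn : 1 ≤ n)
    (hk : 1 ≤ k) (hkd : k < d) (h2k : 2 * k < d)
    (L₁ L₂ : MvPolynomial (Fin (n+1)) F)
    (hL₁ : L₁ ∈ MvPolynomial.homogeneousSubmodule (Fin (n+1)) F 1)
    (hL₂ : L₂ ∈ MvPolynomial.homogeneousSubmodule (Fin (n+1)) F 1)
    (hL₁0 : L₁ ≠ 0) (hL₂0 : L₂ ≠ 0)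
    (hprop : ¬ ∃ c : F, L₁ = c • L₂) :
    ((MvPolynomial.homogeneousSubmodule (Fin (n+1)) F k).map
        (LinearMap.mulLeft F (L₁ ^ (d - k)))) ⊓
      ((MvPolynomial.homogeneousSubmodule (Fin (n+1)) F k).map
        (LinearMap.mulLeft F (L₂ ^ (d - k)))) = ⊥ :=
  osculating_intersection_trivial_general F n d k h2k L₁ L₂ hL₁ hL₂ hL₂0 hprop
end

section
/- For non-proportional nonzero linear forms L_1, L_2 and 1 ≤ k < d with 2k ≤ d, the subspaces V_1 = L_1^{d-k} R_k and V_2 = L_2^{d-k} R_k of R_d satisfy dist(V_1, V_2) = 2·binomial(k+n,n). -/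
/-!
With `m = d - k`, suppose `L₁ ^ m * f = L₂ ^ m * g` with `f, g ∈ R_k`. The linear form `L₂` is
irreducible, hence prime, and does not divide `L₁`, so `L₂ ^ m ∣ f`; as `deg f = k < m` this forces
`f = 0`. Thus `V₁ ⊓ V₂ = 0`, while multiplication by `L_i ^ m` is injective, so each `V_i` has the
dimension `binomial(k + n, n)` of `R_k`.
-/

open MvPolynomial

namespace MvPolynomial

variable {σ F : Type*} [Field F]

lemma homogeneousSubmodule_eq_restrictSupport_finsuppAntidiag [Fintype σ] [DecidableEq σ]
    (k : ℕ) :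
    homogeneousSubmodule σ F k =
      restrictSupport F ((Finset.univ : Finset σ).finsuppAntidiag k : Set (σ →₀ ℕ)) := by
  rw [homogeneousSubmodule_eq_finsupp_supported]
  congr 1
  ext d
  simp [Finsupp.degree_eq_sum]

lemma finrank_homogeneousSubmodule [Fintype σ] [DecidableEq σ] (k : ℕ) :
    Module.finrank F (homogeneousSubmodule σ F k) = (Fintype.card σ + k - 1).choose k := by
  rw [homogeneousSubmodule_eq_restrictSupport_finsuppAntidiag,
    Module.finrank_eq_card_basis (basisRestrictSupport F _)]
  simp only [Finset.coe_sort_coe, Fintype.card_coe, Finset.card_finsuppAntidiag_nat_eq_choose,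
    Finset.card_univ]

instance [Finite σ] (k : ℕ) : Module.Finite F (homogeneousSubmodule σ F k) :=
  Module.Finite.iff_fg.mpr (homogeneousSubmodule_fg σ F k)

lemma exists_eq_smul_of_dvd_of_totalDegree_le {p q : MvPolynomial σ F} (hq : q ≠ 0)
    (hdvd : q ∣ p) (hdeg : p.totalDegree ≤ q.totalDegree) : ∃ c : F, p = c • q := by
  obtain ⟨r, rfl⟩ := hdvd
  obtain rfl | hr := eq_or_ne r 0
  · exact ⟨0, by simp⟩
  rw [totalDegree_mul_of_isDomain hq hr] at hdeg
  have hr0 : r = C (r.coeff 0) := totalDegree_eq_zero_iff_eq_C.mp (by omega)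
  exact ⟨r.coeff 0, by rw [smul_eq_C_mul, ← hr0, mul_comm]⟩

lemma irreducible_of_isHomogeneous_one_s11 {p : MvPolynomial σ F} (hp : p.IsHomogeneous 1)
    (hp0 : p ≠ 0) : Irreducible p := by
  refine irreducible_of_totalDegree_eq_one (hp.totalDegree hp0) fun x hx => ?_
  obtain ⟨d, hd⟩ := ne_zero_iff.mp hp0
  exact isUnit_iff_ne_zero.mpr fun hx0 => hd (zero_dvd_iff.mp (hx0 ▸ hx d))

lemma map_mulLeft_pow_inf_eq_bot {p q : MvPolynomial σ F} (hq : Prime q) (hqp : ¬ q ∣ p)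
    {k m : ℕ} (hkm : k < (q ^ m).totalDegree) :
    (homogeneousSubmodule σ F k).map (LinearMap.mulLeft F (p ^ m)) ⊓
      (homogeneousSubmodule σ F k).map (LinearMap.mulLeft F (q ^ m)) = ⊥ := by
  rw [eq_bot_iff]
  rintro _ ⟨⟨f, hf, rfl⟩, ⟨g, -, hfg⟩⟩
  simp only [LinearMap.mulLeft_apply] at hfg ⊢
  have hdvd : q ^ m ∣ f :=
    hq.pow_dvd_of_dvd_mul_left m (fun h => hqp (hq.dvd_of_dvd_pow h)) ⟨g, hfg.symm⟩
  have hf0 : f = 0 := by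
    by_contra hf0
    have := totalDegree_le_of_dvd_of_isDomain hdvd hf0
    have := hf.totalDegree_le
    omega
  simp [hf0]

lemma finrank_map_mulLeft {p : MvPolynomial σ F} (hp : p ≠ 0)
    (V : Submodule F (MvPolynomial σ F)) :
    Module.finrank F (V.map (LinearMap.mulLeft F p)) = Module.finrank F V :=
  (Submodule.equivMapOfInjective _ (mul_right_injective₀ hp) V).finrank_eq.symm

end MvPolynomial

theorem osculating_dist_small_k_general (F : Type*) [Field F] (n d k : ℕ)
    (h2k : 2 * k < d)
    (L₁ L₂ : MvPolynomial (Fin (n+1)) F)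
    (hL₁ : L₁ ∈ MvPolynomial.homogeneousSubmodule (Fin (n+1)) F 1)
    (hL₂ : L₂ ∈ MvPolynomial.homogeneousSubmodule (Fin (n+1)) F 1)
    (hL₂0 : L₂ ≠ 0)
    (hprop : ¬ ∃ c : F, L₁ = c • L₂)
    (V₁ V₂ : Submodule F (MvPolynomial (Fin (n+1)) F))
    (hV₁ : V₁ = (MvPolynomial.homogeneousSubmodule (Fin (n+1)) F k).map
        (LinearMap.mulLeft F (L₁ ^ (d - k))))
    (hV₂ : V₂ = (MvPolynomial.homogeneousSubmodule (Fin (n+1)) F k).map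
        (LinearMap.mulLeft F (L₂ ^ (d - k)))) :
    Module.finrank F (V₁ ⊔ V₂ : Submodule F (MvPolynomial (Fin (n+1)) F)) -
      Module.finrank F (V₁ ⊓ V₂ : Submodule F (MvPolynomial (Fin (n+1)) F)) =
    2 * (k + n).choose n := by
  subst hV₁ hV₂
  have hL₁0 : L₁ ≠ 0 := fun h => hprop ⟨0, by simp [h]⟩
  have hL₂L₁ : ¬ L₂ ∣ L₁ := fun h => hprop <| exists_eq_smul_of_dvd_of_totalDegree_le hL₂0 h <| by
    rw [hL₂.totalDegree hL₂0]; exact hL₁.totalDegree_le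
  have hdeg : k < (L₂ ^ (d - k)).totalDegree := by
    rw [(hL₂.pow (d - k)).totalDegree (pow_ne_zero _ hL₂0)]; omega
  have hdim (L : MvPolynomial (Fin (n+1)) F) (hL : L ≠ 0) : Module.finrank F
      ((homogeneousSubmodule (Fin (n+1)) F k).map (LinearMap.mulLeft F (L ^ (d - k)))) =
      (k + n).choose n := by
    rw [finrank_map_mulLeft (pow_ne_zero _ hL), finrank_homogeneousSubmodule, Fintype.card_fin,
      show n + 1 + k - 1 = k + n by omega, Nat.choose_symm_add]
  have hinf := map_mulLeft_pow_inf_eq_bot (irreducible_of_isHomogeneous_one_s11 hL₂ hL₂0).prime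
    hL₂L₁ hdeg
  have hsum := Submodule.finrank_sup_add_finrank_inf_eq
    ((homogeneousSubmodule (Fin (n+1)) F k).map (LinearMap.mulLeft F (L₁ ^ (d - k))))
    ((homogeneousSubmodule (Fin (n+1)) F k).map (LinearMap.mulLeft F (L₂ ^ (d - k))))
  rw [hinf, finrank_bot, hdim L₁ hL₁0, hdim L₂ hL₂0] at hsum
  rw [hinf, finrank_bot]
  omega

theorem osculating_dist_small_k (F : Type*) [Field F] (n d k : ℕ) (hn : 1 ≤ n)
    (hk : 1 ≤ k) (hkd : k < d) (h2k : 2 * k < d)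
    (L₁ L₂ : MvPolynomial (Fin (n+1)) F)
    (hL₁ : L₁ ∈ MvPolynomial.homogeneousSubmodule (Fin (n+1)) F 1)
    (hL₂ : L₂ ∈ MvPolynomial.homogeneousSubmodule (Fin (n+1)) F 1)
    (hL₁0 : L₁ ≠ 0) (hL₂0 : L₂ ≠ 0)
    (hprop : ¬ ∃ c : F, L₁ = c • L₂)
    (V₁ V₂ : Submodule F (MvPolynomial (Fin (n+1)) F))
    (hV₁ : V₁ = (MvPolynomial.homogeneousSubmodule (Fin (n+1)) F k).map
        (LinearMap.mulLeft F (L₁ ^ (d - k))))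
    (hV₂ : V₂ = (MvPolynomial.homogeneousSubmodule (Fin (n+1)) F k).map
        (LinearMap.mulLeft F (L₂ ^ (d - k)))) :
    Module.finrank F (V₁ ⊔ V₂ : Submodule F (MvPolynomial (Fin (n+1)) F)) -
      Module.finrank F (V₁ ⊓ V₂ : Submodule F (MvPolynomial (Fin (n+1)) F)) =
    2 * (k + n).choose n :=
  osculating_dist_small_k_general F n d k h2k L₁ L₂ hL₁ hL₂ hL₂0 hprop V₁ V₂ hV₁ hV₂
end
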